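/- Let A be a real d×d matrix, a ∈ ℝᵈ, and let κ, ζ₂, α be real numbers. For a vector field of the form V(v,ψ) = (v₀, α cos²ψ) with constant v₀ ∈ ℝᵈ, one has: (a) [ℳ(V), V](v,ψ) = (0, 2α² cos²ψ) for all (v,ψ) ∈ ℝᵈ × ℝ, and (b) [ℳ²(V), ℳ(V)](v, ±π/2) = (0, 4α²) for all v ∈ ℝᵈ. -/

import Mathlib

/-- Lie bracket of vector fields on `(Fin d → ℝ) × ℝ`:
`[V,W](x) = DW(x)(V(x)) − DV(x)(W(x))`. -/
noncomputable def lieBr {d : ℕ} (V W : (Fin d → ℝ) × ℝ → (Fin d → ℝ) × ℝ) :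
    (Fin d → ℝ) × ℝ → (Fin d → ℝ) × ℝ :=
  fun x => fderiv ℝ W x (V x) - fderiv ℝ V x (W x)

/-- The drift vector field `V₀(v,ψ) = (Av, −1 + (1 − κ² + ⟨a,v⟩)cos²ψ − ζ₂ sin 2ψ)`. -/
noncomputable def vfV0 {d : ℕ} (A : Matrix (Fin d) (Fin d) ℝ) (a : Fin d → ℝ)
    (κ ζ₂ : ℝ) : (Fin d → ℝ) × ℝ → (Fin d → ℝ) × ℝ :=
  fun p => (A.mulVec p.1,
    -1 + (1 - κ ^ 2 + dotProduct a p.1) * Real.cos p.2 ^ 2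
      - ζ₂ * Real.sin (2 * p.2))

/-- `ℳ(V) = [V, V₀]`. -/
noncomputable def vfM {d : ℕ} (A : Matrix (Fin d) (Fin d) ℝ) (a : Fin d → ℝ)
    (κ ζ₂ : ℝ) (V : (Fin d → ℝ) × ℝ → (Fin d → ℝ) × ℝ) :
    (Fin d → ℝ) × ℝ → (Fin d → ℝ) × ℝ :=
  lieBr V (vfV0 A a κ ζ₂)

/-! Every field involved has constant `v`-component and a `ψ`-component affine in `v`, so the
brackets reduce to one-variable calculus. For `W = (u, h(ψ))`, `ℳ(W)` is again affine in `v`, with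
slope `-(sin 2ψ · h + h' · cos²ψ)`. For `V = (v₀, α cos²ψ)` this slope vanishes identically and
`ℳ(V) = (Av₀, (⟨a,v₀⟩ - 2αζ₂) cos²ψ - α sin 2ψ)`, from which (a) is a trigonometric identity.
Where `cos ψ = 0` and `h(ψ) = 0` the slope vanishes too and `[ℳ(W), W] = (0, h'(ψ)²)`; for
`W = ℳ(V)` at `ψ = ±π/2` one has `h' = 2α`, which gives (b). -/

open Real ContinuousLinearMap Matrix

section AffineInFst

variable {E : Type*} [NormedAddCommGroup E] [NormedSpace ℝ E]

theorem HasDerivAt.hasFDerivAt_comp_snd {h : ℝ → ℝ} {h' : ℝ} {x : E × ℝ}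
    (hh : HasDerivAt h h' x.2) :
    HasFDerivAt (fun q : E × ℝ => h q.2) (h' • snd ℝ E ℝ) x :=
  (hh.hasFDerivAt.comp x hasFDerivAt_snd).congr_fderiv (by ext <;> simp [mul_comm])

theorem HasDerivAt.hasFDerivAt_comp_snd_add_mul (ℓ : E →L[ℝ] ℝ) {φ μ : ℝ → ℝ} {φ' μ' : ℝ}
    {x : E × ℝ} (hφ : HasDerivAt φ φ' x.2) (hμ : HasDerivAt μ μ' x.2) :
    HasFDerivAt (fun q : E × ℝ => φ q.2 + ℓ q.1 * μ q.2)
      ((φ' + ℓ x.1 * μ') • snd ℝ E ℝ + μ x.2 • ℓ.comp (fst ℝ E ℝ)) x :=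
  (hφ.hasFDerivAt_comp_snd.add
    ((ℓ.hasFDerivAt.comp x hasFDerivAt_fst).mul hμ.hasFDerivAt_comp_snd)).congr_fderiv
    (by ext <;> simp)

end AffineInFst

theorem hasDerivAt_cos_sq (t : ℝ) : HasDerivAt (fun t => cos t ^ 2) (-sin (2 * t)) t :=
  ((hasDerivAt_cos t).pow 2).congr_deriv (by rw [sin_two_mul]; ring)

theorem hasDerivAt_sin_two_mul (t : ℝ) :
    HasDerivAt (fun t => sin (2 * t)) (2 * cos (2 * t)) t :=
  ((hasDerivAt_sin (2 * t)).comp t ((hasDerivAt_id t).const_mul 2)).congr_deriv (by ring)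

theorem hasDerivAt_mul_cos_sq_sub_mul_sin_two_mul (c α t : ℝ) :
    HasDerivAt (fun t => c * cos t ^ 2 - α * sin (2 * t))
      (-(c * sin (2 * t)) - 2 * α * cos (2 * t)) t :=
  (((hasDerivAt_cos_sq t).const_mul c).sub ((hasDerivAt_sin_two_mul t).const_mul α)).congr_deriv
    (by ring)

section Fields

variable {d : ℕ} (A : Matrix (Fin d) (Fin d) ℝ) (a : Fin d → ℝ) (κ ζ₂ : ℝ)

theorem lieBr_eq_of_hasFDerivAt {V W : (Fin d → ℝ) × ℝ → (Fin d → ℝ) × ℝ}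
    {V' W' : (Fin d → ℝ) × ℝ →L[ℝ] (Fin d → ℝ) × ℝ} {x : (Fin d → ℝ) × ℝ}
    (hV : HasFDerivAt V V' x) (hW : HasFDerivAt W W' x) :
    lieBr V W x = W' (V x) - V' (W x) := by
  rw [lieBr, hV.fderiv, hW.fderiv]

theorem hasFDerivAt_vfV0 (x : (Fin d → ℝ) × ℝ) :
    HasFDerivAt (vfV0 A a κ ζ₂)
      ((A.mulVecLin.toContinuousLinearMap.comp (fst ℝ _ ℝ)).prod
        ((-((1 - κ ^ 2 + a ⬝ᵥ x.1) * sin (2 * x.2)) - 2 * ζ₂ * cos (2 * x.2)) • snd ℝ _ ℝ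
          + cos x.2 ^ 2 • (dotProductBilin ℝ ℝ a).toContinuousLinearMap.comp (fst ℝ _ ℝ))) x := by
  have hφ : HasDerivAt (fun t => -1 + (1 - κ ^ 2) * cos t ^ 2 - ζ₂ * sin (2 * t))
      (-((1 - κ ^ 2) * sin (2 * x.2)) - ζ₂ * (2 * cos (2 * x.2))) x.2 :=
    (((hasDerivAt_cos_sq x.2).const_mul (1 - κ ^ 2)).const_add (-1)).sub
      ((hasDerivAt_sin_two_mul x.2).const_mul ζ₂) |>.congr_deriv (by ring)
  have hV : vfV0 A a κ ζ₂ = fun q => (A.mulVecLin.toContinuousLinearMap q.1,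
      (-1 + (1 - κ ^ 2) * cos q.2 ^ 2 - ζ₂ * sin (2 * q.2))
        + (dotProductBilin ℝ ℝ a).toContinuousLinearMap q.1 * cos q.2 ^ 2) := by
    funext q
    simp only [vfV0, LinearMap.coe_toContinuousLinearMap', mulVecLin_apply,
      dotProductBilin_apply_apply]
    congr 1
    ring
  rw [hV]
  exact ((A.mulVecLin.toContinuousLinearMap.hasFDerivAt.comp x hasFDerivAt_fst).prodMk
    (hφ.hasFDerivAt_comp_snd_add_mul _ (hasDerivAt_cos_sq x.2))).congr_fderiv (by
      ext <;> simp only [ContinuousLinearMap.prod_apply, ContinuousLinearMap.comp_apply, coe_fst',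
        coe_snd', inl_apply, inr_apply, LinearMap.coe_toContinuousLinearMap', mulVecLin_apply,
        mulVec_zero, dotProductBilin_apply_apply, dotProduct_zero, _root_.add_apply,
        _root_.smul_apply, smul_eq_mul, mul_neg, mul_one, mul_zero, zero_add, add_zero]
      ring)

theorem vfM_const_comp_snd (u : Fin d → ℝ) {h h' : ℝ → ℝ} (hh : ∀ t, HasDerivAt h (h' t) t) :
    vfM A a κ ζ₂ (fun q => (u, h q.2)) = fun q => (A *ᵥ u,
      (a ⬝ᵥ u * cos q.2 ^ 2 - ((1 - κ ^ 2) * sin (2 * q.2) + 2 * ζ₂ * cos (2 * q.2)) * h q.2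
        + h' q.2 * (1 - (1 - κ ^ 2) * cos q.2 ^ 2 + ζ₂ * sin (2 * q.2)))
      + a ⬝ᵥ q.1 * (-(sin (2 * q.2) * h q.2) - h' q.2 * cos q.2 ^ 2)) := by
  funext x
  rw [vfM, lieBr_eq_of_hasFDerivAt ((hasFDerivAt_const u x).prodMk (hh x.2).hasFDerivAt_comp_snd)
    (hasFDerivAt_vfV0 A a κ ζ₂ x)]
  simp only [ContinuousLinearMap.prod_apply, ContinuousLinearMap.comp_apply, coe_fst', coe_snd',
    LinearMap.coe_toContinuousLinearMap', mulVecLin_apply, dotProductBilin_apply_apply,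
    _root_.add_apply, _root_.smul_apply, smul_eq_mul, _root_.zero_apply, vfV0, Prod.mk_sub_mk,
    sub_zero, Prod.mk.injEq, true_and]
  ring

theorem lieBr_vfM_self_of_cos_eq_zero (u : Fin d → ℝ) {h h' : ℝ → ℝ}
    (hh : ∀ t, HasDerivAt h (h' t) t) (hh' : Differentiable ℝ h') {ψ : ℝ} (hcos : cos ψ = 0)
    (hψ : h ψ = 0) (v : Fin d → ℝ) :
    lieBr (vfM A a κ ζ₂ (fun q => (u, h q.2))) (fun q => (u, h q.2)) (v, ψ) = (0, h' ψ ^ 2) := by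
  have hd : Differentiable ℝ h := fun t => (hh t).differentiableAt
  have hφ : DifferentiableAt ℝ (fun t => a ⬝ᵥ u * cos t ^ 2
      - ((1 - κ ^ 2) * sin (2 * t) + 2 * ζ₂ * cos (2 * t)) * h t
      + h' t * (1 - (1 - κ ^ 2) * cos t ^ 2 + ζ₂ * sin (2 * t))) ψ := by fun_prop
  have hμ : DifferentiableAt ℝ (fun t => -(sin (2 * t) * h t) - h' t * cos t ^ 2) ψ := by
    fun_prop
  rw [vfM_const_comp_snd A a κ ζ₂ u hh]
  refine (lieBr_eq_of_hasFDerivAt ((hasFDerivAt_const _ _).prodMk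
    (hφ.hasDerivAt.hasFDerivAt_comp_snd_add_mul (dotProductBilin ℝ ℝ a).toContinuousLinearMap
      hμ.hasDerivAt)) ((hasFDerivAt_const _ _).prodMk
      ((hh ψ).hasFDerivAt_comp_snd (x := (v, ψ))))).trans ?_
  simp [hcos, hψ, sin_two_mul, sq]

variable (v₀ : Fin d → ℝ) (α : ℝ)

theorem vfM_cos_sq :
    vfM A a κ ζ₂ (fun q => (v₀, α * cos q.2 ^ 2))
      = fun q => (A *ᵥ v₀, (a ⬝ᵥ v₀ - 2 * α * ζ₂) * cos q.2 ^ 2 - α * sin (2 * q.2)) := by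
  rw [vfM_const_comp_snd A a κ ζ₂ v₀ fun t => (hasDerivAt_cos_sq t).const_mul α]
  funext q
  congr 1
  rw [sin_two_mul, cos_two_mul]
  linear_combination (-4 * α * ζ₂ * cos q.2 ^ 2) * sin_sq_add_cos_sq q.2

theorem lieBr_vfM_cos_sq (p : (Fin d → ℝ) × ℝ) :
    lieBr (vfM A a κ ζ₂ (fun q => (v₀, α * cos q.2 ^ 2))) (fun q => (v₀, α * cos q.2 ^ 2)) p
      = (0, 2 * α ^ 2 * cos p.2 ^ 2) := by
  rw [vfM_cos_sq]
  refine (lieBr_eq_of_hasFDerivAt ((hasFDerivAt_const _ p).prodMk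
    (hasDerivAt_mul_cos_sq_sub_mul_sin_two_mul _ α p.2).hasFDerivAt_comp_snd)
    ((hasFDerivAt_const _ p).prodMk
      ((hasDerivAt_cos_sq p.2).const_mul α).hasFDerivAt_comp_snd)).trans ?_
  simp only [ContinuousLinearMap.prod_apply, _root_.zero_apply, _root_.smul_apply, coe_snd',
    smul_eq_mul, Prod.mk_sub_mk, sub_self, Prod.mk.injEq, true_and, sin_two_mul, cos_two_mul]
  linear_combination (4 * α ^ 2 * cos p.2 ^ 2) * sin_sq_add_cos_sq p.2

theorem lieBr_vfM_vfM_cos_sq_of_cos_eq_zero {ψ : ℝ} (hcos : cos ψ = 0) (v : Fin d → ℝ) :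
    lieBr (vfM A a κ ζ₂ (vfM A a κ ζ₂ (fun q => (v₀, α * cos q.2 ^ 2))))
      (vfM A a κ ζ₂ (fun q => (v₀, α * cos q.2 ^ 2))) (v, ψ) = (0, 4 * α ^ 2) := by
  rw [vfM_cos_sq, lieBr_vfM_self_of_cos_eq_zero A a κ ζ₂ _
    (hasDerivAt_mul_cos_sq_sub_mul_sin_two_mul _ α) (by fun_prop) hcos
    (by simp [hcos, sin_two_mul])]
  norm_num [hcos, sin_two_mul, cos_two_mul, mul_pow]

end Fields

/-- For `V(v,ψ) = (v₀, α cos²ψ)` with constant `v₀`: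
(a) `[ℳ(V), V](v,ψ) = (0, 2α² cos²ψ)` everywhere, and
(b) `[ℳ²(V), ℳ(V)](v, ±π/2) = (0, 4α²)`. -/
theorem bracket_cos_sq_field {d : ℕ} (A : Matrix (Fin d) (Fin d) ℝ)
    (a : Fin d → ℝ) (κ ζ₂ α : ℝ) (v₀ : Fin d → ℝ) :
    (∀ p : (Fin d → ℝ) × ℝ,
        lieBr (vfM A a κ ζ₂ (fun q => (v₀, α * Real.cos q.2 ^ 2)))
            (fun q => (v₀, α * Real.cos q.2 ^ 2)) p
          = (0, 2 * α ^ 2 * Real.cos p.2 ^ 2))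
    ∧ ∀ v : Fin d → ℝ,
        lieBr (vfM A a κ ζ₂ (vfM A a κ ζ₂ (fun q => (v₀, α * Real.cos q.2 ^ 2))))
            (vfM A a κ ζ₂ (fun q => (v₀, α * Real.cos q.2 ^ 2))) (v, Real.pi / 2)
          = (0, 4 * α ^ 2)
        ∧ lieBr (vfM A a κ ζ₂ (vfM A a κ ζ₂ (fun q => (v₀, α * Real.cos q.2 ^ 2))))
            (vfM A a κ ζ₂ (fun q => (v₀, α * Real.cos q.2 ^ 2))) (v, -(Real.pi / 2))
          = (0, 4 * α ^ 2) :=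
  ⟨lieBr_vfM_cos_sq A a κ ζ₂ v₀ α, fun v =>
    ⟨lieBr_vfM_vfM_cos_sq_of_cos_eq_zero A a κ ζ₂ v₀ α cos_pi_div_two v,
      lieBr_vfM_vfM_cos_sq_of_cos_eq_zero A a κ ζ₂ v₀ α (by rw [cos_neg, cos_pi_div_two]) v⟩⟩
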